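/- arXiv:2007.01423 — 2 statements merged into one kernel-verified Lean document; each statement's English description precedes it below -/
import Mathlib

section
/- For fixed a positive sample weight and K·P negative weight with P ∈ (0,1], the function f(x) = log σ(x) + K·P·log σ(-x) attains its maximum at x* = log(1/(K·P)); in particular if K·P = 1 the optimum is x* = 0. -/
noncomputable def sigmoid (x : ℝ) : ℝ := 1 / (1 + Real.exp (-x))

/-! Substituting `t = σ(x)` and using `σ(-x) = 1 - σ(x)`, the objective becomes the weighted
Bernoulli log-likelihood `log t + c · log (1 - t)` on `(0, 1)`, with `c = K·P`. Applying
`log u ≤ u - 1` to the ratios of `t` and `1 - t` to `1/(1+c)` and `c/(1+c)`, weighted by `1` and `c`,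
the linear terms cancel, so the maximum is at `t = 1/(1+c) = σ(log (1/c))`. -/

namespace Real

theorem log_sub_log_le_div_sub_one {u v : ℝ} (hu : 0 < u) (hv : 0 < v) :
    log u - log v ≤ u / v - 1 := by
  rw [← log_div hu.ne' hv.ne']
  exact log_le_sub_one_of_pos (div_pos hu hv)

theorem mul_log_add_mul_log_one_sub_le {a b t : ℝ} (ha : 0 < a) (hb : 0 < b) (ht₀ : 0 < t)
    (ht₁ : t < 1) :
    a * log t + b * log (1 - t) ≤ a * log (a / (a + b)) + b * log (b / (a + b)) := by
  have hab : 0 < a + b := add_pos ha hb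
  have h₁ := log_sub_log_le_div_sub_one ht₀ (div_pos ha hab)
  have h₂ := log_sub_log_le_div_sub_one (sub_pos.2 ht₁) (div_pos hb hab)
  have hcancel : a * (t / (a / (a + b)) - 1) + b * ((1 - t) / (b / (a + b)) - 1) = 0 := by
    field_simp
    ring
  linear_combination a * h₁ + b * h₂ + hcancel

theorem sigmoid_log {c : ℝ} (hc : 0 < c) : sigmoid (log c) = c / (1 + c) := by
  rw [sigmoid_def, exp_neg, exp_log hc]
  field_simp
  ring

theorem sigmoid_neg_log {c : ℝ} (hc : 0 < c) : sigmoid (-log c) = 1 / (1 + c) := by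
  rw [sigmoid_neg, sigmoid_log hc]
  field_simp
  ring

end Real

theorem sigmoid_eq_real_sigmoid : sigmoid = Real.sigmoid := by
  funext x
  rw [sigmoid, Real.sigmoid_def, one_div]

/-- The per-pair negative sampling objective `f(x) = log σ(x) + K·P·log σ(-x)`
with `K > 0`, `P ∈ (0,1]`, attains its maximum at `x* = log (1/(K·P))`;
in particular if `K·P = 1` the optimum is `x* = 0`. -/
theorem per_pair_optimum (K P : ℝ) (hK : 0 < K) (hP : P ∈ Set.Ioc (0 : ℝ) 1) :
    (∀ x : ℝ,
      Real.log (sigmoid x) + K * P * Real.log (sigmoid (-x))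
        ≤ Real.log (sigmoid (Real.log (1 / (K * P))))
          + K * P * Real.log (sigmoid (-(Real.log (1 / (K * P)))))) ∧
    (K * P = 1 → Real.log (1 / (K * P)) = 0) := by
  have hc : 0 < K * P := mul_pos hK hP.1
  refine ⟨fun x => ?_, fun h => by rw [h, div_one, Real.log_one]⟩
  rw [sigmoid_eq_real_sigmoid, one_div, Real.log_inv, neg_neg, Real.sigmoid_neg_log hc,
    Real.sigmoid_log hc, Real.sigmoid_neg]
  simpa only [one_mul] using
    Real.mul_log_add_mul_log_one_sub_le one_pos hc (Real.sigmoid_pos x) (Real.sigmoid_lt_one x)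
end

section
/- In a connected graph, if every shortest path between any two non-popular nodes passes through some popular node, then for any nodes u, v the DNS-approx estimate d̂(u,v) = min over popular nodes p, q of [d(u,p) + d(p,q) + d(q,v)] equals the true shortest-path distance d(u,v), provided u and v are not themselves popular and u ≠ v. -/
/-!
A shortest `u`–`v` walk through a landmark `x` splits at `x`, so the diagonal term
`(x, x)` of the estimate is at most `d(u,v)`; conversely every term of the estimate is
at least `d(u,v)` by the triangle inequality, which needs `G` connected since
`SimpleGraph.dist` is `0` between unreachable vertices.
-/

namespace SimpleGraph

variable {V : Type*} {G : SimpleGraph V}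

theorem Walk.dist_add_dist_le_length {u v x : V} (w : G.Walk u v) (hx : x ∈ w.support) :
    G.dist u x + G.dist x v ≤ w.length := by
  obtain ⟨q, r, rfl⟩ := Walk.mem_support_iff_exists_append.mp hx
  rw [Walk.length_append]
  exact add_le_add (dist_le q) (dist_le r)

theorem Connected.dist_le_dist_add_dist_add_dist (hG : G.Connected) (u p q v : V) :
    G.dist u v ≤ G.dist u p + G.dist p q + G.dist q v :=
  calc G.dist u v ≤ G.dist u q + G.dist q v := hG.dist_triangle
    _ ≤ G.dist u p + G.dist p q + G.dist q v := by
      gcongr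
      exact hG.dist_triangle

end SimpleGraph

theorem dns_approx_exact_general {V : Type*}
    (G : SimpleGraph V) (hG : G.Connected) (P : Finset V) (hP : P.Nonempty)
    (hcover : ∀ u v : V, u ∉ P → v ∉ P → u ≠ v →
      ∃ w : G.Walk u v, w.IsPath ∧ w.length = G.dist u v ∧ ∃ x ∈ w.support, x ∈ P) :
    ∀ u v : V, u ∉ P → v ∉ P → u ≠ v →
      (P ×ˢ P).inf' (hP.product hP)
          (fun pq => G.dist u pq.1 + G.dist pq.1 pq.2 + G.dist pq.2 v)
        = G.dist u v := by
  intro u v hu hv huv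
  obtain ⟨w, -, hw_length, x, hx_support, hxP⟩ := hcover u v hu hv huv
  apply le_antisymm
  · calc _ ≤ G.dist u x + G.dist x x + G.dist x v :=
          Finset.inf'_le (b := (x, x)) _ (Finset.mem_product.mpr ⟨hxP, hxP⟩)
      _ = G.dist u x + G.dist x v := by rw [SimpleGraph.dist_self, add_zero]
      _ ≤ G.dist u v := hw_length ▸ w.dist_add_dist_le_length hx_support
  · exact Finset.le_inf' _ _ fun pq _ => hG.dist_le_dist_add_dist_add_dist u pq.1 pq.2 v

/-- If every pair of distinct non-popular nodes has some shortest path passing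
through a popular node, then the DNS-approx estimate
`min_{p,q ∈ P} [d(u,p) + d(p,q) + d(q,v)]` equals the true distance `d(u,v)`
for all distinct non-popular `u, v`. -/
theorem dns_approx_exact {V : Type*} [Fintype V] [DecidableEq V]
    (G : SimpleGraph V) (hG : G.Connected) (P : Finset V) (hP : P.Nonempty)
    (hcover : ∀ u v : V, u ∉ P → v ∉ P → u ≠ v →
      ∃ w : G.Walk u v, w.IsPath ∧ w.length = G.dist u v ∧ ∃ x ∈ w.support, x ∈ P) :
    ∀ u v : V, u ∉ P → v ∉ P → u ≠ v →
      (P ×ˢ P).inf' (hP.product hP)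
          (fun pq => G.dist u pq.1 + G.dist pq.1 pq.2 + G.dist pq.2 v)
        = G.dist u v :=
  dns_approx_exact_general G hG P hP hcover
end
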